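/- Let {A, B} be a polyphase GCA pair of size s_1×⋯×s_r and {C, D} a polyphase GCA pair of size t_1×⋯×t_r, and fix a dimension index i. Define E as the concatenation of A⊗C and B⊗D in the i-th dimension, and F as the concatenation of B*⊗C and −A*⊗D in the i-th dimension. Then {E, F} is a polyphase GCA pair of size s_1t_1×⋯×2s_it_i×⋯×s_rt_r. -/

import Mathlib

open scoped BigOperators

/-- An `r`-dimensional complex array, as a complex-valued function on ℤ^r. -/
abbrev Arr (r : ℕ) := (Fin r → ℤ) → ℂ

/-- Index tuple `i` lies in the box `[0, s₁) × ⋯ × [0, s_r)`. -/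
def InBox {r : ℕ} (s : Fin r → ℕ) (i : Fin r → ℤ) : Prop :=
  ∀ k, 0 ≤ i k ∧ i k < (s k : ℤ)

/-- The array vanishes outside the box of size `s`. -/
def SupportedOn {r : ℕ} (s : Fin r → ℕ) (A : Arr r) : Prop :=
  ∀ i, ¬ InBox s i → A i = 0

/-- Aperiodic autocorrelation of an array. -/
noncomputable def autocorr {r : ℕ} (A : Arr r) (δ : Fin r → ℤ) : ℂ :=
  ∑ᶠ i : Fin r → ℤ, A i * (starRingEnd ℂ) (A (i - δ))

/-- Weight of an array: the sum of squared moduli of its entries. -/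
noncomputable def weight {r : ℕ} (A : Arr r) : ℝ :=
  ∑ᶠ i : Fin r → ℤ, ‖A i‖ ^ 2

/-- Flipped-and-conjugated array `A*`, relative to size `s`. -/
noncomputable def flipConj {r : ℕ} (s : Fin r → ℕ) (A : Arr r) : Arr r :=
  fun i => (starRingEnd ℂ) (A fun k => (s k : ℤ) - 1 - i k)

/-- Kronecker product of arrays, where `t` is the size of `B`:
`(A ⊗ B)[i·t + j] = A[i]·B[j]`. -/
noncomputable def kron {r : ℕ} (t : Fin r → ℕ) (A B : Arr r) : Arr r :=
  fun i => A (fun k => i k / (t k : ℤ)) * B (fun k => i k % (t k : ℤ))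

/-- Concatenation of `X` (of extent `u` in dimension `i0`) and `Y` in dimension `i0`. -/
noncomputable def concat {r : ℕ} (i0 : Fin r) (u : ℕ) (X Y : Arr r) : Arr r :=
  fun v => if v i0 < (u : ℤ) then X v else Y (Function.update v i0 (v i0 - u))

/-- A polyphase array of size `s`: supported on the box and all in-box entries
are `N`-th roots of unity for some `N`. -/
def IsPolyphase {r : ℕ} (s : Fin r → ℕ) (A : Arr r) : Prop :=
  SupportedOn s A ∧ ∃ N : ℕ, 0 < N ∧ ∀ i, InBox s i → A i ^ N = 1

/-- A binary array of size `s`: all in-box entries are ±1, zero outside. -/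
def IsBinary {r : ℕ} (s : Fin r → ℕ) (A : Arr r) : Prop :=
  SupportedOn s A ∧ ∀ i, InBox s i → A i = 1 ∨ A i = -1

/-- Entries are zero or of modulus one, supported on the box of size `s`. -/
def IsUnimodZero {r : ℕ} (s : Fin r → ℕ) (A : Arr r) : Prop :=
  SupportedOn s A ∧ ∀ i, InBox s i → A i = 0 ∨ ‖A i‖ = 1

/-- Golay complementarity of a pair: `R_A + R_B = (w(A)+w(B))·Δ`. -/
def ComplementaryPair {r : ℕ} (A B : Arr r) : Prop :=
  ∀ δ : Fin r → ℤ, autocorr A δ + autocorr B δ =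
    if δ = 0 then ((weight A + weight B : ℝ) : ℂ) else 0

/-- Golay complementarity of a quad: `R_A + R_B + R_C + R_D = (Σ w)·Δ`. -/
def ComplementaryQuad {r : ℕ} (A B C D : Arr r) : Prop :=
  ∀ δ : Fin r → ℤ, autocorr A δ + autocorr B δ + autocorr C δ + autocorr D δ =
    if δ = 0 then ((weight A + weight B + weight C + weight D : ℝ) : ℂ) else 0

/-!
Write `d` for the shift by `s i0 * t i0` in direction `i0`, so that `E = A⊗C + τ_d (B⊗D)` and
`F = B*⊗C - τ_d (A*⊗D)`. Expanding, `R_E + R_F` is the sum of the four autocorrelations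
`R_{A⊗C}, R_{B⊗D}, R_{B*⊗C}, R_{A*⊗D}` and of shifted cross-correlations of `E`'s pieces minus
those of `F`'s pieces. Reflecting the block index of a Kronecker product inside each block of
`t` gives `C_{P⊗Q, P'⊗Q'} = C_{P'*⊗Q, P*⊗Q'}`: the cross terms cancel and `R_{P*⊗Q} = R_{P⊗Q}`.
Finally `R_{A⊗Q} + R_{B⊗Q} = (w_A + w_B) R_Q` because `R_A + R_B` is supported at the origin, and
complementarity of `{C, D}` finishes the proof.
-/

open Finset Function

section

variable {r : ℕ}

noncomputable def boxFinset (s : Fin r → ℕ) : Finset (Fin r → ℤ) :=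
  Fintype.piFinset fun k => Ico 0 (s k : ℤ)

theorem mem_boxFinset {s : Fin r → ℕ} {i : Fin r → ℤ} : i ∈ boxFinset s ↔ InBox s i := by
  simp [boxFinset, InBox]

noncomputable def crossCorr (X Y : Arr r) (δ : Fin r → ℤ) : ℂ :=
  ∑ᶠ i, X i * starRingEnd ℂ (Y (i - δ))

theorem autocorr_eq_crossCorr (A : Arr r) : autocorr A = crossCorr A A := rfl

theorem SupportedOn.support_subset {s : Fin r → ℕ} {X : Arr r} (hX : SupportedOn s X) :
    support X ⊆ boxFinset s := fun i hi => by
  by_contra hout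
  exact hi (hX i (mt mem_boxFinset.2 hout))

theorem SupportedOn.finite_support {s : Fin r → ℕ} {X : Arr r} (hX : SupportedOn s X) :
    (support X).Finite :=
  (boxFinset s).finite_toSet.subset hX.support_subset

theorem SupportedOn.crossCorr_eq_sum {s : Fin r → ℕ} {X : Arr r} (hX : SupportedOn s X)
    (Y : Arr r) (δ : Fin r → ℤ) :
    crossCorr X Y δ = ∑ i ∈ boxFinset s, X i * starRingEnd ℂ (Y (i - δ)) :=
  finsum_eq_sum_of_support_subset _ ((support_mul_subset_left _ _).trans hX.support_subset)

theorem crossCorr_add_left {X Y : Arr r} (hX : (support X).Finite) (hY : (support Y).Finite)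
    (Z : Arr r) (δ : Fin r → ℤ) :
    crossCorr (X + Y) Z δ = crossCorr X Z δ + crossCorr Y Z δ := by
  simp only [crossCorr, Pi.add_apply, add_mul]
  exact finsum_add_distrib (hX.subset (support_mul_subset_left _ _))
    (hY.subset (support_mul_subset_left _ _))

theorem crossCorr_add_right {X : Arr r} (hX : (support X).Finite) (Y Z : Arr r)
    (δ : Fin r → ℤ) :
    crossCorr X (Y + Z) δ = crossCorr X Y δ + crossCorr X Z δ := by
  simp only [crossCorr, Pi.add_apply, map_add, mul_add]
  exact finsum_add_distrib (hX.subset (support_mul_subset_left _ _))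
    (hX.subset (support_mul_subset_left _ _))

theorem crossCorr_neg_left (X Y : Arr r) (δ : Fin r → ℤ) :
    crossCorr (-X) Y δ = -crossCorr X Y δ := by
  simp only [crossCorr, Pi.neg_apply, neg_mul, finsum_neg_distrib]

theorem crossCorr_neg_right (X Y : Arr r) (δ : Fin r → ℤ) :
    crossCorr X (-Y) δ = -crossCorr X Y δ := by
  simp only [crossCorr, Pi.neg_apply, map_neg, mul_neg, finsum_neg_distrib]

-- No finiteness hypothesis: `ofReal` is injective, so both `finsum`s fall back to `0` together.
theorem ofReal_weight (X : Arr r) : (weight X : ℂ) = autocorr X 0 := by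
  have h := Complex.ofRealHom.toAddMonoidHom.map_finsum_of_injective Complex.ofReal_injective
    fun i => ‖X i‖ ^ 2
  simp only [autocorr, sub_zero, Complex.mul_conj, Complex.normSq_eq_norm_sq]
  exact_mod_cast h

def blockIndex (t : Fin r → ℕ) (i : Fin r → ℤ) : Fin r → ℤ := fun k => i k / t k

def blockOffset (t : Fin r → ℕ) (i : Fin r → ℤ) : Fin r → ℤ := fun k => i k % t k

theorem kron_apply (t : Fin r → ℕ) (P Q : Arr r) (i : Fin r → ℤ) :
    kron t P Q i = P (blockIndex t i) * Q (blockOffset t i) := rfl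

variable {s t : Fin r → ℕ}

theorem blockIndex_add_mul (ht : ∀ k, 0 < t k) (x m : Fin r → ℤ) :
    blockIndex t (x + m * (Nat.cast ∘ t)) = blockIndex t x + m :=
  funext fun k => Int.add_mul_ediv_right _ _ (Int.natCast_ne_zero.2 (ht k).ne')

theorem blockOffset_add_mul (x m : Fin r → ℤ) :
    blockOffset t (x + m * (Nat.cast ∘ t)) = blockOffset t x :=
  funext fun _ => Int.add_mul_emod_self_right _ _ _

theorem blockIndex_mul_add_blockOffset (x : Fin r → ℤ) :
    blockIndex t x * (Nat.cast ∘ t) + blockOffset t x = x :=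
  funext fun _ => Int.ediv_mul_add_emod _ _

theorem blockIndex_eq_zero_iff (ht : ∀ k, 0 < t k) {x : Fin r → ℤ} :
    blockIndex t x = 0 ↔ InBox t x := by
  simp only [funext_iff, blockIndex, Pi.zero_apply, InBox]
  refine forall_congr' fun k => ⟨fun h => ?_, fun h => Int.ediv_eq_zero_of_lt h.1 h.2⟩
  have htk : (0 : ℤ) < t k := by exact_mod_cast ht k
  exact ((Int.ediv_emod_unique htk).1 ⟨h, by rw [Int.emod_def, h, mul_zero, sub_zero]⟩).2

theorem blockOffset_of_inBox {x : Fin r → ℤ} (hx : InBox t x) : blockOffset t x = x :=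
  funext fun k => Int.emod_eq_of_lt (hx k).1 (hx k).2

theorem inBox_blockOffset (ht : ∀ k, 0 < t k) (x : Fin r → ℤ) : InBox t (blockOffset t x) :=
  fun k => ⟨Int.emod_nonneg _ (Int.natCast_ne_zero.2 (ht k).ne'),
    Int.emod_lt_of_pos _ (Int.natCast_pos.2 (ht k))⟩

theorem InBox.pos {x : Fin r → ℤ} (hx : InBox t x) (k : Fin r) : 0 < t k := by
  exact_mod_cast (hx k).1.trans_lt (hx k).2

theorem InBox.pos_right {x : Fin r → ℤ} (hx : InBox (fun k => s k * t k) x) (k : Fin r) :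
    0 < t k :=
  Nat.pos_of_mul_pos_left (hx.pos k)

theorem InBox.blockIndex {x : Fin r → ℤ} (hx : InBox (fun k => s k * t k) x) :
    InBox s (blockIndex t x) := fun k => by
  have htk : (0 : ℤ) < t k := by exact_mod_cast hx.pos_right k
  refine ⟨Int.ediv_nonneg (hx k).1 htk.le, (Int.ediv_lt_iff_lt_mul htk).2 ?_⟩
  exact_mod_cast (hx k).2

theorem InBox.mul_add {a ρ : Fin r → ℤ} (ha : InBox s a) (hρ : InBox t ρ) :
    InBox (fun k => s k * t k) (a * (Nat.cast ∘ t) + ρ) := fun k => by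
  obtain ⟨ha₀, ha₁⟩ := ha k
  obtain ⟨hρ₀, hρ₁⟩ := hρ k
  simp only [Pi.add_apply, Pi.mul_apply, comp_apply, Nat.cast_mul]
  constructor <;> nlinarith

theorem sum_boxFinset_mul {M : Type*} [AddCommMonoid M] (ht : ∀ k, 0 < t k)
    (f : (Fin r → ℤ) → M) :
    ∑ i ∈ boxFinset (fun k => s k * t k), f i =
      ∑ ρ ∈ boxFinset t, ∑ a ∈ boxFinset s, f (a * (Nat.cast ∘ t) + ρ) := by
  rw [← sum_product']
  refine sum_nbij' (fun i => (blockOffset t i, blockIndex t i))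
    (fun p => p.2 * (Nat.cast ∘ t) + p.1) (fun i hi => ?_) (fun p hp => ?_) (fun i _ => ?_)
    (fun p hp => ?_) (fun i _ => ?_)
  · simp only [mem_product, mem_boxFinset] at hi ⊢
    exact ⟨inBox_blockOffset ht i, hi.blockIndex⟩
  · simp only [mem_product, mem_boxFinset] at hp ⊢
    exact hp.2.mul_add hp.1
  · exact blockIndex_mul_add_blockOffset i
  · simp only [mem_product, mem_boxFinset] at hp
    rw [add_comm, blockIndex_add_mul ht, blockOffset_add_mul, blockOffset_of_inBox hp.1,
      (blockIndex_eq_zero_iff ht).2 hp.1, zero_add]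
  · rw [blockIndex_mul_add_blockOffset]

theorem SupportedOn.kron {P Q : Arr r} (hP : SupportedOn s P) (hQ : SupportedOn t Q) :
    SupportedOn (fun k => s k * t k) (kron t P Q) := by
  intro i hi
  rw [kron_apply]
  by_cases ht : ∀ k, 0 < t k
  · suffices ¬InBox s (blockIndex t i) by rw [hP _ this, zero_mul]
    intro hidx
    refine hi ?_
    simpa only [blockIndex_mul_add_blockOffset] using hidx.mul_add (inBox_blockOffset ht i)
  · obtain ⟨k, hk⟩ := not_forall.1 ht
    rw [hQ _ fun hbox => hk (hbox.pos k), mul_zero]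

theorem crossCorr_kron (ht : ∀ k, 0 < t k) {P Q : Arr r} (hP : SupportedOn s P)
    (hQ : SupportedOn t Q) (P' Q' : Arr r) (δ : Fin r → ℤ) :
    crossCorr (kron t P Q) (kron t P' Q') δ =
      ∑ ρ ∈ boxFinset t, Q ρ * starRingEnd ℂ (Q' (blockOffset t (ρ - δ))) *
        crossCorr P P' (-blockIndex t (ρ - δ)) := by
  rw [(hP.kron hQ).crossCorr_eq_sum, sum_boxFinset_mul ht]
  refine sum_congr rfl fun ρ hρ => ?_
  rw [mem_boxFinset] at hρ
  rw [hP.crossCorr_eq_sum, mul_sum]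
  refine sum_congr rfl fun a _ => ?_
  have hidx : a * (Nat.cast ∘ t) + ρ = ρ + a * (Nat.cast ∘ t) := add_comm _ _
  have hidx' : a * (Nat.cast ∘ t) + ρ - δ = ρ - δ + a * (Nat.cast ∘ t) := by abel
  rw [kron_apply, kron_apply, hidx', hidx, blockIndex_add_mul ht, blockIndex_add_mul ht,
    blockOffset_add_mul, blockOffset_add_mul, blockOffset_of_inBox hρ,
    (blockIndex_eq_zero_iff ht).2 hρ, zero_add, sub_neg_eq_add, add_comm a, map_mul]
  ring

theorem ComplementaryPair.autocorr_kron_add_autocorr_kron {A B Q : Arr r}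
    (hAB : ComplementaryPair A B) (ht : ∀ k, 0 < t k) (hA : SupportedOn s A)
    (hB : SupportedOn s B) (hQ : SupportedOn t Q) (δ : Fin r → ℤ) :
    autocorr (kron t A Q) δ + autocorr (kron t B Q) δ =
      ((weight A + weight B : ℝ) : ℂ) * autocorr Q δ := by
  unfold ComplementaryPair at hAB
  simp only [autocorr_eq_crossCorr] at hAB ⊢
  rw [crossCorr_kron ht hA hQ, crossCorr_kron ht hB hQ, hQ.crossCorr_eq_sum, mul_sum,
    ← sum_add_distrib]
  refine sum_congr rfl fun ρ _ => ?_
  rw [← mul_add, hAB]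
  by_cases hbox : InBox t (ρ - δ)
  · rw [if_pos (neg_eq_zero.2 ((blockIndex_eq_zero_iff ht).2 hbox)),
      blockOffset_of_inBox hbox]
    ring
  · rw [if_neg (mt neg_eq_zero.1 (mt (blockIndex_eq_zero_iff ht).1 hbox)), hQ _ hbox, map_zero]
    ring

theorem flipConj_apply (P : Arr r) (i : Fin r → ℤ) :
    flipConj s P i = starRingEnd ℂ (P (Nat.cast ∘ s - 1 - i)) := rfl

theorem flipConj_flipConj (P : Arr r) : flipConj s (flipConj s P) = P := by
  funext i
  simp only [flipConj_apply, Complex.conj_conj, sub_sub_cancel]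

theorem crossCorr_kron_flipConj (s : Fin r → ℕ) (ht : ∀ k, 0 < t k) (P P' Q Q' : Arr r)
    (δ : Fin r → ℤ) :
    crossCorr (kron t P Q) (kron t P' Q') δ =
      crossCorr (kron t (flipConj s P') Q) (kron t (flipConj s P) Q') δ := by
  -- With `i = q t + ρ` and `i - δ = q' t + ρ'`, the involution `φ` keeps the offsets `ρ, ρ'`
  -- and sends the block indices `(q, q')` to `(s - 1 - q', s - 1 - q)`.
  obtain ⟨m, hm⟩ : ∃ m : (Fin r → ℤ) → Fin r → ℤ,
      ∀ i, m i = Nat.cast ∘ s - 1 - blockIndex t (i - δ) - blockIndex t i := ⟨_, fun _ => rfl⟩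
  obtain ⟨φ, hφ⟩ : ∃ φ : (Fin r → ℤ) → Fin r → ℤ, ∀ i, φ i = i + m i * (Nat.cast ∘ t) :=
    ⟨_, fun _ => rfl⟩
  have hφ_idx (i) : blockIndex t (φ i) = blockIndex t i + m i := by
    rw [hφ, blockIndex_add_mul ht]
  have hφ_sub (i) : φ i - δ = i - δ + m i * (Nat.cast ∘ t) := by
    rw [hφ]
    abel
  have hφ_sub_idx (i) : blockIndex t (φ i - δ) = blockIndex t (i - δ) + m i := by
    rw [hφ_sub, blockIndex_add_mul ht]
  have hφφ : Involutive φ := fun i => by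
    have hmφ : m (φ i) = -m i := by
      rw [hm (φ i), hφ_idx, hφ_sub_idx, hm i]
      abel
    rw [hφ (φ i), hmφ, hφ i]
    ring
  refine finsum_eq_of_bijective φ hφφ.bijective fun i => ?_
  have hflip : Nat.cast ∘ s - 1 - blockIndex t (φ i) = blockIndex t (i - δ) := by
    rw [hφ_idx, hm]
    abel
  have hflip' : Nat.cast ∘ s - 1 - blockIndex t (φ i - δ) = blockIndex t i := by
    rw [hφ_sub_idx, hm]
    abel
  rw [kron_apply, kron_apply, kron_apply, kron_apply, flipConj_apply, flipConj_apply, hflip,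
    hflip', hφ_sub, hφ, blockOffset_add_mul, blockOffset_add_mul, map_mul, map_mul,
    Complex.conj_conj]
  ring

theorem autocorr_kron_flipConj (s : Fin r → ℕ) (ht : ∀ k, 0 < t k) (P Q : Arr r) :
    autocorr (kron t (flipConj s P) Q) = autocorr (kron t P Q) := by
  funext δ
  simpa only [autocorr_eq_crossCorr, flipConj_flipConj] using
    crossCorr_kron_flipConj s ht (flipConj s P) (flipConj s P) Q Q δ

theorem autocorr_neg (X : Arr r) : autocorr (-X) = autocorr X := by
  funext δ
  simp only [autocorr_eq_crossCorr, crossCorr_neg_left, crossCorr_neg_right, neg_neg]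

theorem crossCorr_translate_left (d : Fin r → ℤ) (X Y : Arr r) (δ : Fin r → ℤ) :
    crossCorr (translate d X) Y δ = crossCorr X Y (δ - d) :=
  finsum_eq_of_bijective (· - d) (Equiv.subRight d).bijective fun i => by
    simp only [translate_apply, sub_sub_sub_cancel_right]

theorem crossCorr_translate_right (d : Fin r → ℤ) (X Y : Arr r) (δ : Fin r → ℤ) :
    crossCorr X (translate d Y) δ = crossCorr X Y (δ + d) := by
  simp only [crossCorr, translate_apply, sub_sub]

theorem autocorr_add_translate {X Y : Arr r} (hX : (support X).Finite)
    (hY : (support Y).Finite) (d δ : Fin r → ℤ) :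
    autocorr (X + translate d Y) δ =
      autocorr X δ + autocorr Y δ + crossCorr X Y (δ + d) + crossCorr Y X (δ - d) := by
  have hτY : (support (translate d Y)).Finite := by
    rw [support_translate]
    exact hY.vadd_set
  rw [autocorr_eq_crossCorr, crossCorr_add_left hX hτY, crossCorr_add_right hX,
    crossCorr_add_right hτY, crossCorr_translate_right, crossCorr_translate_left,
    crossCorr_translate_left, crossCorr_translate_right, sub_add_cancel, autocorr_eq_crossCorr,
    autocorr_eq_crossCorr]
  ring

theorem concat_eq_add_translate (i0 : Fin r) {u u' : Fin r → ℕ} {X Y : Arr r}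
    (hX : SupportedOn u X) (hY : SupportedOn u' Y) :
    concat i0 (u i0) X Y = X + translate (Pi.single i0 (u i0 : ℤ)) Y := by
  funext v
  have hupdate : update v i0 (v i0 - u i0) = v - Pi.single i0 (u i0 : ℤ) := by
    rw [Pi.update_eq_sub_add_single, Pi.single_sub]
    abel
  simp only [concat, Pi.add_apply, translate_apply, hupdate]
  split_ifs with hv
  · refine (add_eq_left.2 (hY _ fun hbox => ?_)).symm
    have := (hbox i0).1
    simp only [Pi.sub_apply, Pi.single_eq_same, sub_nonneg] at this
    omega
  · rw [hX _ fun hbox => hv (hbox i0).2, zero_add]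

theorem SupportedOn.mono {s s' : Fin r → ℕ} (h : ∀ k, s k ≤ s' k) {X : Arr r}
    (hX : SupportedOn s X) : SupportedOn s' X := fun i hi =>
  hX i fun hbox => hi fun k => ⟨(hbox k).1, (hbox k).2.trans_le (by exact_mod_cast h k)⟩

theorem SupportedOn.add {X Y : Arr r} (hX : SupportedOn s X) (hY : SupportedOn s Y) :
    SupportedOn s (X + Y) := fun i hi => by
  rw [Pi.add_apply, hX i hi, hY i hi, add_zero]

theorem SupportedOn.neg {X : Arr r} (hX : SupportedOn s X) : SupportedOn s (-X) := fun i hi => by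
  rw [Pi.neg_apply, hX i hi, neg_zero]

theorem InBox.flip {i : Fin r → ℤ} (hi : InBox s i) : InBox s (Nat.cast ∘ s - 1 - i) := by
  intro k
  have := hi k
  simp only [Pi.sub_apply, comp_apply, Pi.one_apply]
  omega

theorem SupportedOn.flipConj {X : Arr r} (hX : SupportedOn s X) :
    SupportedOn s (flipConj s X) := fun i hi => by
  rw [flipConj_apply, hX _ fun hbox => hi ?_, map_zero]
  simpa only [sub_sub_cancel] using hbox.flip

theorem SupportedOn.translate_single (i0 : Fin r) {u : Fin r → ℕ} {Y : Arr r}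
    (hY : SupportedOn u Y) :
    SupportedOn (fun k => if k = i0 then 2 * u k else u k)
      (translate (Pi.single i0 (u i0 : ℤ)) Y) := fun v hv =>
  hY _ fun hbox => hv fun k => by
    have := hbox k
    by_cases hk : k = i0
    · subst hk
      simp only [Pi.sub_apply, Pi.single_eq_same, if_pos] at this ⊢
      omega
    · simpa only [Pi.sub_apply, Pi.single_eq_of_ne hk, sub_zero, if_neg hk] using this

theorem SupportedOn.concat (i0 : Fin r) {u : Fin r → ℕ} {X Y : Arr r} (hX : SupportedOn u X)
    (hY : SupportedOn u Y) :
    SupportedOn (fun k => if k = i0 then 2 * u k else u k) (concat i0 (u i0) X Y) := by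
  rw [concat_eq_add_translate i0 hX hY]
  exact (hX.mono fun k => by split_ifs <;> omega).add (hY.translate_single i0)

theorem InBox.of_concat_left {i0 : Fin r} {u : Fin r → ℕ} {v : Fin r → ℤ}
    (hv : InBox (fun k => if k = i0 then 2 * u k else u k) v) (h : v i0 < u i0) :
    InBox u v := fun k => by
  by_cases hk : k = i0
  · subst hk
    exact ⟨(hv k).1, h⟩
  · simpa only [if_neg hk] using hv k

theorem InBox.of_concat_right {i0 : Fin r} {u : Fin r → ℕ} {v : Fin r → ℤ}
    (hv : InBox (fun k => if k = i0 then 2 * u k else u k) v) (h : ¬v i0 < u i0) :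
    InBox u (update v i0 (v i0 - u i0)) := fun k => by
  have := hv k
  by_cases hk : k = i0
  · subst hk
    simp only [update_self, if_pos] at this ⊢
    omega
  · simpa only [update_of_ne hk, if_neg hk] using this

theorem IsPolyphase.kron {P Q : Arr r} (hP : IsPolyphase s P) (hQ : IsPolyphase t Q) :
    IsPolyphase (fun k => s k * t k) (kron t P Q) := by
  obtain ⟨hPs, M, hM, hPM⟩ := hP
  obtain ⟨hQs, N, hN, hQN⟩ := hQ
  refine ⟨hPs.kron hQs, M * N, Nat.mul_pos hM hN, fun i hi => ?_⟩
  rw [kron_apply, mul_pow, pow_mul, hPM _ hi.blockIndex, one_pow, one_mul, mul_comm, pow_mul,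
    hQN _ (inBox_blockOffset hi.pos_right i), one_pow]

theorem IsPolyphase.flipConj {P : Arr r} (hP : IsPolyphase s P) :
    IsPolyphase s (flipConj s P) := by
  obtain ⟨hPs, N, hN, hPN⟩ := hP
  refine ⟨hPs.flipConj, N, hN, fun i hi => ?_⟩
  rw [flipConj_apply, ← map_pow, hPN _ hi.flip, map_one]

theorem IsPolyphase.neg {P : Arr r} (hP : IsPolyphase s P) : IsPolyphase s (-P) := by
  obtain ⟨hPs, N, hN, hPN⟩ := hP
  refine ⟨hPs.neg, 2 * N, by omega, fun i hi => ?_⟩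
  rw [Pi.neg_apply, Even.neg_pow (even_two_mul N), pow_mul', hPN i hi, one_pow]

theorem IsPolyphase.concat (i0 : Fin r) {u : Fin r → ℕ} {X Y : Arr r} (hX : IsPolyphase u X)
    (hY : IsPolyphase u Y) :
    IsPolyphase (fun k => if k = i0 then 2 * u k else u k) (concat i0 (u i0) X Y) := by
  obtain ⟨hXs, M, hM, hXM⟩ := hX
  obtain ⟨hYs, N, hN, hYN⟩ := hY
  refine ⟨hXs.concat i0 hYs, M * N, Nat.mul_pos hM hN, fun v hv => ?_⟩
  unfold _root_.concat
  split_ifs with h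
  · rw [pow_mul, hXM _ (hv.of_concat_left h), one_pow]
  · rw [mul_comm, pow_mul, hYN _ (hv.of_concat_right h), one_pow]

theorem ComplementaryPair.of_autocorr_add_autocorr_eq_mul {C D E F : Arr r}
    (hCD : ComplementaryPair C D) (c : ℂ)
    (h : ∀ δ, autocorr E δ + autocorr F δ = c * (autocorr C δ + autocorr D δ)) :
    ComplementaryPair E F := by
  intro δ
  have hweight := h 0
  rw [hCD 0, if_pos rfl, ← ofReal_weight, ← ofReal_weight, ← Complex.ofReal_add] at hweight
  rw [h δ, hCD δ]
  split_ifs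
  · exact hweight.symm
  · exact mul_zero c

theorem ComplementaryPair.autocorr_concat_kron_add_autocorr_concat_kron (i0 : Fin r)
    {A B C D : Arr r} (hAB : ComplementaryPair A B) (hA : SupportedOn s A) (hB : SupportedOn s B)
    (hC : SupportedOn t C) (hD : SupportedOn t D) (δ : Fin r → ℤ) :
    autocorr (concat i0 (s i0 * t i0) (kron t A C) (kron t B D)) δ +
        autocorr (concat i0 (s i0 * t i0) (kron t (flipConj s B) C)
          (-kron t (flipConj s A) D)) δ =
      ((weight A + weight B : ℝ) : ℂ) * (autocorr C δ + autocorr D δ) := by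
  by_cases ht : ∀ k, 0 < t k
  · have hAC := hA.kron hC
    have hBD := hB.kron hD
    have hBC' := hB.flipConj.kron hC
    have hAD' := hA.flipConj.kron hD
    rw [concat_eq_add_translate i0 hAC hBD, concat_eq_add_translate i0 hBC' hAD'.neg,
      autocorr_add_translate hAC.finite_support hBD.finite_support,
      autocorr_add_translate hBC'.finite_support hAD'.neg.finite_support, autocorr_neg,
      crossCorr_neg_left, crossCorr_neg_right, autocorr_kron_flipConj s ht,
      autocorr_kron_flipConj s ht, ← crossCorr_kron_flipConj s ht, ← crossCorr_kron_flipConj s ht]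
    linear_combination hAB.autocorr_kron_add_autocorr_kron ht hA hB hC δ +
      hAB.autocorr_kron_add_autocorr_kron ht hA hB hD δ
  · obtain ⟨k, hk⟩ := not_forall.1 ht
    have hempty (i : Fin r → ℤ) : ¬InBox t i := fun hbox => hk (hbox.pos k)
    obtain rfl : C = 0 := funext fun i => hC i (hempty i)
    obtain rfl : D = 0 := funext fun i => hD i (hempty i)
    have hkron (P : Arr r) : kron t P 0 = 0 := funext fun _ => mul_zero _
    have hconcat : concat i0 (s i0 * t i0) (0 : Arr r) 0 = 0 := funext fun _ => by
      simp only [concat, Pi.zero_apply, ite_self]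
    have hautocorr : autocorr (0 : Arr r) δ = 0 := by simp [autocorr]
    rw [hkron, hkron, hkron, hkron, neg_zero, hconcat, hautocorr, add_zero, mul_zero]

end

/-- From polyphase GCA pairs {A,B} of size s and {C,D} of size t, the
concatenations E = (A⊗C)|(B⊗D) and F = (B*⊗C)|(−A*⊗D) in dimension i0 form a
polyphase GCA pair of size s₁t₁×⋯×2 s_{i0} t_{i0}×⋯×s_r t_r. -/
theorem stmt7 {r : ℕ} (s t : Fin r → ℕ) (i0 : Fin r) (A B C D : Arr r)
    (hA : IsPolyphase s A) (hB : IsPolyphase s B) (hAB : ComplementaryPair A B)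
    (hC : IsPolyphase t C) (hD : IsPolyphase t D) (hCD : ComplementaryPair C D)
    (E F : Arr r)
    (hE : E = concat i0 (s i0 * t i0) (kron t A C) (kron t B D))
    (hF : F = concat i0 (s i0 * t i0) (kron t (flipConj s B) C)
      (fun v => -kron t (flipConj s A) D v)) :
    IsPolyphase (fun k => if k = i0 then 2 * (s k * t k) else s k * t k) E ∧
      IsPolyphase (fun k => if k = i0 then 2 * (s k * t k) else s k * t k) F ∧
      ComplementaryPair E F := by
  subst hE hF
  refine ⟨(hA.kron hC).concat i0 (hB.kron hD),
    (hB.flipConj.kron hC).concat i0 (hA.flipConj.kron hD).neg, ?_⟩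
  exact hCD.of_autocorr_add_autocorr_eq_mul _
    (hAB.autocorr_concat_kron_add_autocorr_concat_kron i0 hA.1 hB.1 hC.1 hD.1)
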